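/- arXiv:1204.1873 — 11 statements merged into one kernel-verified Lean document; each statement's English description precedes it below -/
import Mathlib

section
/- (Characterization of Feasibility, Theorem 1) Let S = {v_1, ..., v_n} be a finite nonempty set of points in ℝ^m and p ∈ ℝ^m. Then p lies in conv(S) if and only if for every point p' ∈ conv(S) with p' ≠ p there exists v_j ∈ S such that d(p', v_j) > d(p, v_j). -/
/-!
The points at least as close to `p'` as to `p` form a closed half-space. If it contained all of
`S`, it would contain `conv(S)` and hence `p`, forcing `p' = p`. Conversely, if `p ∉ conv(S)`, let
`q` be the nearest point of `conv(S)` to `p`. The angle at `q` between `p` and any `w ∈ conv(S)`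
is obtuse, so `q` is at least as close to every `w ∈ conv(S)`, and in particular to every `v j`,
as `p` is.
-/

open Set RealInnerProductSpace

variable {E : Type*} [NormedAddCommGroup E] [InnerProductSpace ℝ E]

theorem dist_le_dist_iff_le_inner (a b x : E) :
    dist a x ≤ dist b x ↔ (‖a‖ ^ 2 - ‖b‖ ^ 2) / 2 ≤ ⟪a - b, x⟫ := by
  rw [dist_eq_norm, dist_eq_norm, ← sq_le_sq₀ (norm_nonneg _) (norm_nonneg _),
    norm_sub_sq_real, norm_sub_sq_real, inner_sub_left]
  constructor <;> intro h <;> linarith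

theorem convex_setOf_dist_le_dist (a b : E) : Convex ℝ {x | dist a x ≤ dist b x} := by
  simp_rw [dist_le_dist_iff_le_inner]
  exact convex_halfSpace_ge (innerₛₗ ℝ (a - b)).isLinear _

theorem exists_dist_lt_dist_of_mem_convexHull {s : Set E} {p p' : E}
    (hp : p ∈ convexHull ℝ s) (hne : p' ≠ p) : ∃ x ∈ s, dist p x < dist p' x := by
  by_contra! h
  have hp' : dist p' p ≤ dist p p := convexHull_min h (convex_setOf_dist_le_dist p' p) hp
  exact hne (dist_le_zero.1 (by simpa using hp'))

theorem dist_le_dist_of_inner_sub_nonpos {p q w : E} (h : ⟪p - q, w - q⟫ ≤ 0) :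
    dist q w ≤ dist p w := by
  rw [dist_le_dist_iff_le_inner]
  have hpq : ‖p‖ ^ 2 = ‖p - q‖ ^ 2 + 2 * ⟪p - q, q⟫ + ‖q‖ ^ 2 := by
    rw [norm_sub_sq_real, inner_sub_left, real_inner_self_eq_norm_sq, real_inner_comm]
    ring
  have hqp : ⟪q - p, w⟫ = -⟪p - q, w⟫ := by rw [← inner_neg_left, neg_sub]
  rw [inner_sub_right] at h
  nlinarith [sq_nonneg ‖p - q‖]

theorem exists_ne_forall_dist_le_dist_of_notMem {K : Set E} (hne : K.Nonempty)
    (hcomplete : IsComplete K) (hconv : Convex ℝ K) {p : E} (hp : p ∉ K) :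
    ∃ q ∈ K, q ≠ p ∧ ∀ w ∈ K, dist q w ≤ dist p w := by
  obtain ⟨q, hqK, hq⟩ := exists_norm_eq_iInf_of_complete_convex hne hcomplete hconv p
  have hobtuse := (norm_eq_iInf_iff_real_inner_le_zero hconv hqK).mp hq
  exact ⟨q, hqK, fun hqp => hp (hqp ▸ hqK),
    fun w hw => dist_le_dist_of_inner_sub_nonpos (hobtuse w hw)⟩

/-- **Characterization of Feasibility** (Theorem 1). `p` lies in the convex hull of
`S = {v 1, …, v n}` iff for every `p' ∈ conv(S)` with `p' ≠ p` there is some `v j`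
strictly farther from `p'` than from `p`. -/
theorem characterization_of_feasibility {m n : ℕ} (hn : 0 < n)
    (v : Fin n → EuclideanSpace ℝ (Fin m)) (p : EuclideanSpace ℝ (Fin m)) :
    p ∈ convexHull ℝ (Set.range v) ↔
      ∀ p' ∈ convexHull ℝ (Set.range v), p' ≠ p →
        ∃ j : Fin n, dist p' (v j) > dist p (v j) := by
  constructor
  · intro hp p' _ hne
    obtain ⟨_, ⟨j, rfl⟩, hj⟩ := exists_dist_lt_dist_of_mem_convexHull hp hne
    exact ⟨j, hj⟩
  · intro h
    by_contra hp
    have hne : (convexHull ℝ (range v)).Nonempty :=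
      ⟨v ⟨0, hn⟩, subset_convexHull ℝ _ (mem_range_self _)⟩
    obtain ⟨q, hqK, hqp, hq⟩ := exists_ne_forall_dist_le_dist_of_notMem hne
      ((finite_range v).isClosed_convexHull (𝕜 := ℝ)).isComplete (convex_convexHull ℝ _) hp
    obtain ⟨j, hj⟩ := h q hqK hqp
    exact (hq _ (subset_convexHull ℝ _ (mem_range_self j))).not_gt hj
end

section
/- (Characterization with non-strict inequality, Theorem 2) Let S = {v_1, ..., v_n} be a finite nonempty set of points in ℝ^m and p ∈ ℝ^m. Then p lies in conv(S) if and only if for every point p' ∈ conv(S) with p' ≠ p there exists v_j ∈ S such that d(p', v_j) ≥ d(p, v_j). -/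
/-!
The points strictly closer to `a` than to `b` form an open half-space, so a point of `conv(S)`
cannot be strictly farther than `p'` from every vertex: it would then be strictly closer to `p'`
than to itself. Conversely, if `p ∉ conv(S)`, the nearest point `q` of `conv(S)` to `p` is
strictly closer than `p` to every point of `conv(S)`, since `p - q` makes an obtuse angle with
every direction into `conv(S)` from `q`.
-/

open scoped InnerProductSpace

section

variable {F : Type*} [NormedAddCommGroup F] [InnerProductSpace ℝ F]

theorem convex_setOf_dist_lt_dist (a b : F) : Convex ℝ {x | dist a x < dist b x} := by
  have hhalf : {x | dist a x < dist b x} = {x | ⟪b - a, x⟫_ℝ < (‖b‖ ^ 2 - ‖a‖ ^ 2) / 2} := by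
    ext x
    simp only [Set.mem_ofPred_eq, dist_eq_norm, inner_sub_left]
    rw [← sq_lt_sq₀ (norm_nonneg _) (norm_nonneg _), norm_sub_sq_real, norm_sub_sq_real]
    constructor <;> intro h <;> linarith
  rw [hhalf]
  exact convex_halfSpace_lt (innerₛₗ ℝ (b - a)).isLinear _

theorem exists_dist_le_dist_of_mem_convexHull {s : Set F} {x : F} (hx : x ∈ convexHull ℝ s)
    (y : F) : ∃ z ∈ s, dist x z ≤ dist y z := by
  by_contra! hfar
  have hsub : convexHull ℝ s ⊆ {z | dist y z < dist x z} :=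
    convexHull_min hfar (convex_setOf_dist_lt_dist y x)
  have hself : dist y x < dist x x := hsub hx
  rw [dist_self] at hself
  exact dist_nonneg.not_gt hself

theorem exists_dist_lt_dist_of_notMem_convex {K : Set F} (hne : K.Nonempty) (hK : IsComplete K)
    (hconv : Convex ℝ K) {p : F} (hp : p ∉ K) : ∃ q ∈ K, q ≠ p ∧ ∀ y ∈ K, dist q y < dist p y := by
  obtain ⟨q, hq, hqmin⟩ := exists_norm_eq_iInf_of_complete_convex hne hK hconv p
  have hobtuse := (norm_eq_iInf_iff_real_inner_le_zero hconv hq).mp hqmin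
  have hqp : q ≠ p := fun h => hp (h ▸ hq)
  refine ⟨q, hq, hqp, fun y hy => ?_⟩
  have hpq : 0 < ‖p - q‖ ^ 2 := by
    have := sub_ne_zero.mpr hqp.symm
    positivity
  have hsplit : ‖p - y‖ ^ 2 = ‖p - q‖ ^ 2 - 2 * ⟪p - q, y - q⟫_ℝ + ‖y - q‖ ^ 2 := by
    rw [← norm_sub_sq_real]; congr 2; abel
  rw [dist_eq_norm, dist_eq_norm, ← sq_lt_sq₀ (norm_nonneg _) (norm_nonneg _), hsplit,
    norm_sub_rev q y]
  linarith [hobtuse y hy]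

end

/-- **Characterization with non-strict inequality** (Theorem 2). `p` lies in the convex
hull of `S = {v 1, …, v n}` iff for every `p' ∈ conv(S)` with `p' ≠ p` there is some
`v j` at least as far from `p'` as from `p`. -/
theorem characterization_nonstrict {m n : ℕ} (hn : 0 < n)
    (v : Fin n → EuclideanSpace ℝ (Fin m)) (p : EuclideanSpace ℝ (Fin m)) :
    p ∈ convexHull ℝ (Set.range v) ↔
      ∀ p' ∈ convexHull ℝ (Set.range v), p' ≠ p →
        ∃ j : Fin n, dist p' (v j) ≥ dist p (v j) := by
  constructor
  · rintro hp p' - -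
    obtain ⟨-, ⟨j, rfl⟩, hj⟩ := exists_dist_le_dist_of_mem_convexHull hp p'
    exact ⟨j, hj⟩
  · intro hfar
    by_contra hp
    have hne : (convexHull ℝ (Set.range v)).Nonempty :=
      ⟨v ⟨0, hn⟩, subset_convexHull ℝ _ ⟨⟨0, hn⟩, rfl⟩⟩
    have hcomplete : IsComplete (convexHull ℝ (Set.range v)) :=
      (Set.finite_range v).isCompact_convexHull (𝕜 := ℝ) |>.isClosed.isComplete
    obtain ⟨q, hq, hqp, hcloser⟩ :=
      exists_dist_lt_dist_of_notMem_convex hne hcomplete (convex_convexHull ℝ _) hp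
    obtain ⟨j, hj⟩ := hfar q hq hqp
    exact hj.not_gt (hcloser (v j) (subset_convexHull ℝ _ ⟨j, rfl⟩))
end

section
/- (Witness approximates the distance within a factor of two) Let S = {v_1, ..., v_n} be a finite nonempty set of points in ℝ^m and p ∈ ℝ^m with p ∉ conv(S). Let Δ = min{d(p, x) : x ∈ conv(S)} be the distance from p to conv(S). Then every p-witness p' ∈ conv(S) (i.e., d(p', v_i) < d(p, v_i) for all i) satisfies (1/2) d(p, p') ≤ Δ ≤ d(p, p'). -/
/-- **Witness approximates the distance within a factor of two**. If `p ∉ conv(S)`, then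
every `p`-witness `p'` satisfies `d(p,p')/2 ≤ Δ ≤ d(p,p')`, where `Δ` is the distance from
`p` to `conv(S)`. -/
theorem witness_approximates_distance {m n : ℕ} (hn : 0 < n)
    (v : Fin n → EuclideanSpace ℝ (Fin m)) (p : EuclideanSpace ℝ (Fin m))
    (hp : p ∉ convexHull ℝ (Set.range v)) (Δ : ℝ)
    (hΔ : Δ = Metric.infDist p (convexHull ℝ (Set.range v)))
    (p' : EuclideanSpace ℝ (Fin m)) (hp' : p' ∈ convexHull ℝ (Set.range v))
    (hwit : ∀ i : Fin n, dist p' (v i) < dist p (v i)) :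
    dist p p' / 2 ≤ Δ ∧ Δ ≤ dist p p' := by
  have key : ∀ x ∈ convexHull ℝ (Set.range v), dist x p' ≤ dist x p := by
    -- the half-space {x | dist x p' ≤ dist x p} is convex and contains all v i
    have equiv : ∀ x : EuclideanSpace ℝ (Fin m),
        dist x p' ≤ dist x p ↔
          inner (𝕜 := ℝ) (p - p') x ≤ (‖p‖ ^ 2 - ‖p'‖ ^ 2) / 2 := by
      intro x
      rw [dist_eq_norm, dist_eq_norm]
      rw [← Real.sqrt_sq (norm_nonneg (x - p')), ← Real.sqrt_sq (norm_nonneg (x - p)),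
        Real.sqrt_le_sqrt_iff (by positivity)]
      rw [@norm_sub_sq_real, @norm_sub_sq_real]
      constructor <;> intro h <;> [skip; skip] <;>
        · simp only [inner_sub_left] at *
          nlinarith [real_inner_comm x p, real_inner_comm x p']
    have hconv : Convex ℝ {x : EuclideanSpace ℝ (Fin m) |
        inner (𝕜 := ℝ) (p - p') x ≤ (‖p‖ ^ 2 - ‖p'‖ ^ 2) / 2} :=
      convex_halfSpace_le (innerSL ℝ (p - p')).toLinearMap.isLinear _
    intro x hx
    rw [equiv]
    have : x ∈ {x : EuclideanSpace ℝ (Fin m) |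
        inner (𝕜 := ℝ) (p - p') x ≤ (‖p‖ ^ 2 - ‖p'‖ ^ 2) / 2} := by
      refine convexHull_min ?_ hconv hx
      rintro _ ⟨i, rfl⟩
      have := (hwit i).le
      rw [dist_comm p', dist_comm p, equiv (v i)] at this
      exact this
    exact this
  constructor
  · rw [hΔ]
    rw [Metric.infDist_eq_iInf]
    have : Nonempty ((convexHull ℝ) (Set.range v)) := ⟨⟨p', hp'⟩⟩
    apply le_ciInf
    rintro ⟨x, hx⟩
    have h1 := key x hx
    have h2 : dist p p' ≤ dist p x + dist x p' := dist_triangle p x p'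
    have h3 : dist x p = dist p x := dist_comm x p
    linarith
  · rw [hΔ]
    exact Metric.infDist_le_dist_of_mem hp'
end

section
/- (General Intersecting Balls Property) Let v_1, ..., v_n be points in ℝ^m (n ≥ 1), let r_1, ..., r_n be positive reals, and let B_i = {x ∈ ℝ^m : d(x, v_i) < r_i}. Suppose p ∈ ℝ^m satisfies d(p, v_i) = r_i for all i. Then p ∈ conv({v_1, ..., v_n}) if and only if ⋂_{i=1}^n B_i = ∅. -/
/-!
A point `x` lies in every ball `B i` exactly when `d = x - p` satisfies
`‖d‖² < 2 ⟪d, v i - p⟫` for all `i`. Such a `d` puts every `v i` in the open half-space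
`{y | ‖d‖² < 2 ⟪d, y - p⟫}`, which misses `p`; so it cannot exist when `p` is in the convex hull.
Conversely, if `p` is outside the (closed) convex hull, a separating direction `u` with
`δ < ⟪u, v i - p⟫` for all `i` yields such a `d` after scaling `u` down to `(δ / ‖u‖²) • u`.
-/

open RealInnerProductSpace

variable {E : Type*} [NormedAddCommGroup E] [InnerProductSpace ℝ E]

theorem dist_add_lt_dist_iff (p d v : E) :
    dist (p + d) v < dist p v ↔ ‖d‖ ^ 2 < 2 * ⟪d, v - p⟫ := by
  have hexpand : dist (p + d) v ^ 2 = ‖d‖ ^ 2 - 2 * ⟪d, v - p⟫ + dist p v ^ 2 := by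
    rw [dist_eq_norm, dist_eq_norm, show p + d - v = d - (v - p) by abel, norm_sub_sq_real,
      norm_sub_rev]
  rw [← sq_lt_sq₀ dist_nonneg dist_nonneg, hexpand]
  constructor <;> intro h <;> linarith

theorem convex_setOf_lt_inner_sub (c : ℝ) (d p : E) : Convex ℝ {y | c < ⟪d, y - p⟫} := by
  have hset : {y | c < ⟪d, y - p⟫} = {y | c + ⟪d, p⟫ < ⟪d, y⟫} := by
    ext y
    simp only [Set.mem_ofPred_eq, inner_sub_right]
    constructor <;> intro h <;> linarith
  rw [hset]
  exact convex_halfSpace_gt (innerₛₗ ℝ d).isLinear _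

theorem not_forall_norm_sq_lt_two_inner_of_mem_convexHull {s : Set E} {p : E}
    (hp : p ∈ convexHull ℝ s) (d : E) : ¬ ∀ y ∈ s, ‖d‖ ^ 2 < 2 * ⟪d, y - p⟫ := by
  intro hd
  have hhalf : s ⊆ {y | ‖d‖ ^ 2 / 2 < ⟪d, y - p⟫} := fun y hy => by
    have := hd y hy
    simp only [Set.mem_ofPred_eq]
    linarith
  have hp' := convexHull_min hhalf (convex_setOf_lt_inner_sub _ d p) hp
  simp only [Set.mem_ofPred_eq, sub_self, inner_zero_right] at hp'
  linarith [sq_nonneg ‖d‖]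

theorem exists_pos_forall_lt_inner_sub_of_notMem [CompleteSpace E] {t : Set E} {p : E}
    (hconv : Convex ℝ t) (hclosed : IsClosed t) (hp : p ∉ t) :
    ∃ u : E, ∃ δ > 0, ∀ y ∈ t, δ < ⟪u, y - p⟫ := by
  obtain ⟨f, c, hfp, hft⟩ := geometric_hahn_banach_point_closed hconv hclosed hp
  refine ⟨(InnerProductSpace.toDual ℝ E).symm f, c - f p, sub_pos.2 hfp, fun y hy => ?_⟩
  rw [InnerProductSpace.toDual_symm_apply, map_sub]
  linarith [hft y hy]

theorem exists_norm_sq_lt_two_inner_of_lt_inner (u : E) {δ : ℝ} (hδ : 0 < δ) :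
    ∃ d : E, ∀ w, δ < ⟪u, w⟫ → ‖d‖ ^ 2 < 2 * ⟪d, w⟫ := by
  refine ⟨(δ / ‖u‖ ^ 2) • u, fun w hw => ?_⟩
  have hu : u ≠ 0 := by
    rintro rfl
    rw [inner_zero_left] at hw
    linarith
  have hnu : 0 < ‖u‖ ^ 2 := by positivity
  set c := δ / ‖u‖ ^ 2
  have hc : c * ‖u‖ ^ 2 = δ := div_mul_cancel₀ _ hnu.ne'
  have hc_pos : 0 < c := div_pos hδ hnu
  rw [norm_smul, real_inner_smul_left, mul_pow, Real.norm_eq_abs, sq_abs]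
  calc c ^ 2 * ‖u‖ ^ 2 = c * δ := by rw [← hc]; ring
    _ < c * ⟪u, w⟫ := mul_lt_mul_of_pos_left hw hc_pos
    _ < 2 * (c * ⟪u, w⟫) := by linarith [mul_pos hc_pos (hδ.trans hw)]

theorem general_intersecting_balls_property_general {m n : ℕ}
    (v : Fin n → EuclideanSpace ℝ (Fin m)) (r : Fin n → ℝ)
    (p : EuclideanSpace ℝ (Fin m)) (hp : ∀ i, dist p (v i) = r i) :
    p ∈ convexHull ℝ (Set.range v) ↔
      (⋂ i : Fin n, Metric.ball (v i) (r i)) = ∅ := by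
  simp only [Set.eq_empty_iff_forall_notMem, Set.mem_iInter, Metric.mem_ball, ← hp]
  constructor
  · intro hmem x hx
    refine not_forall_norm_sq_lt_two_inner_of_mem_convexHull hmem (x - p) ?_
    rintro _ ⟨i, rfl⟩
    rw [← dist_add_lt_dist_iff, add_sub_cancel]
    exact hx i
  · contrapose!
    intro hp_out
    obtain ⟨u, δ, hδ, hsep⟩ := exists_pos_forall_lt_inner_sub_of_notMem (convex_convexHull ℝ _)
      ((Set.finite_range v).isClosed_convexHull ℝ) hp_out
    obtain ⟨d, hd⟩ := exists_norm_sq_lt_two_inner_of_lt_inner u hδ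
    exact ⟨p + d, fun i => (dist_add_lt_dist_iff p d (v i)).2
      (hd _ (hsep _ (subset_convexHull ℝ _ (Set.mem_range_self i))))⟩

/-- **General Intersecting Balls Property**. If `p` is a common boundary point of the open
balls `B i = ball (v i) (r i)`, then `p ∈ conv({v 1, …, v n})` iff the open balls have
empty intersection. -/
theorem general_intersecting_balls_property {m n : ℕ} (hn : 0 < n)
    (v : Fin n → EuclideanSpace ℝ (Fin m)) (r : Fin n → ℝ) (hr : ∀ i, 0 < r i)
    (p : EuclideanSpace ℝ (Fin m)) (hp : ∀ i, dist p (v i) = r i) :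
    p ∈ convexHull ℝ (Set.range v) ↔
      (⋂ i : Fin n, Metric.ball (v i) (r i)) = ∅ :=
  general_intersecting_balls_property_general v r p hp
end

section
/- (Gap reduction with exponential bound) Let p, p', v be three distinct points in ℝ^m with d(p, v) ≤ d(p', v), let p'' be the point on the segment from p' to v closest to p, and assume p'' ≠ v. Set δ = d(p, p'), δ' = d(p, p''), r = d(p, v), and let R be any real with R ≥ r. If δ ≤ r, then δ' ≤ δ·√(1 − δ²/(4R²)) < δ·exp(−δ²/(8R²)). -/
/-!
Moving from `p'` towards `v` by a step of length `δ²/(2R)` brings us closer to `p`: since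
`d(p,p') ≤ d(p,v) ≤ d(p',v)`, the law of cosines shows that the component of `p - p'` along the
unit direction of `v - p'` is at least `δ²/(2r) ≥ δ²/(2R)`, so the squared distance to `p` drops
from `δ²` to at most `δ² - δ⁴/(2R²) + δ⁴/(4R²)`. The exponential bound is `1 - y < exp (-y)`.
-/

open Real

theorem Real.sqrt_one_sub_lt_exp_neg_half {y : ℝ} (hy : y ≠ 0) : √(1 - y) < exp (-y / 2) := by
  rw [sqrt_lt' (exp_pos _), sq, ← exp_add, add_halves]
  linarith [add_one_lt_exp (neg_ne_zero.2 hy)]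

section InnerProductSpace

variable {E : Type*} [NormedAddCommGroup E] [InnerProductSpace ℝ E]

theorem dist_add_smul_sub_sq (p p' v : E) (t : ℝ) :
    dist p (p' + t • (v - p')) ^ 2 =
      dist p p' ^ 2 - 2 * t * inner ℝ (p - p') (v - p') + t ^ 2 * dist p' v ^ 2 := by
  rw [dist_eq_norm, dist_eq_norm, dist_eq_norm', sub_add_eq_sub_sub, norm_sub_sq_real,
    inner_smul_right, norm_smul, mul_pow, Real.norm_eq_abs, sq_abs]
  ring

theorem sq_dist_mul_dist_le_two_mul_inner_mul_dist {p p' v : E}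
    (hδ : dist p p' ≤ dist p v) (hle : dist p v ≤ dist p' v) :
    dist p p' ^ 2 * dist p' v ≤ 2 * inner ℝ (p - p') (v - p') * dist p v := by
  have hcos : 2 * inner ℝ (p - p') (v - p') = dist p p' ^ 2 + dist p' v ^ 2 - dist p v ^ 2 := by
    have := norm_sub_sq_real (p - p') (v - p')
    rw [sub_sub_sub_cancel_right] at this
    rw [dist_eq_norm, dist_eq_norm', dist_eq_norm]
    linarith
  rw [hcos]
  have hδ0 : 0 ≤ dist p p' := dist_nonneg
  -- with `δ, r, s` the three distances, the difference of the two sides is `(s - r) (r s + r² - δ²)`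
  nlinarith [mul_nonneg (sub_nonneg.2 hle) (by nlinarith :
    0 ≤ dist p v * dist p' v + dist p v ^ 2 - dist p p' ^ 2)]

theorem exists_mem_segment_sq_dist_le {p p' v : E} {R : ℝ}
    (hδ : dist p p' ≤ dist p v) (hle : dist p v ≤ dist p' v) (hR : dist p v ≤ R) :
    ∃ x ∈ segment ℝ p' v, dist p x ^ 2 ≤ dist p p' ^ 2 * (1 - dist p p' ^ 2 / (4 * R ^ 2)) := by
  set δ := dist p p'
  set s := dist p' v
  rcases (dist_nonneg : 0 ≤ δ).eq_or_lt with hδ0 | hδ0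
  · exact ⟨p', left_mem_segment ℝ p' v, by simp [δ, ← hδ0]⟩
  have hs : 0 < s := hδ0.trans_le (hδ.trans hle)
  have hR0 : 0 < R := hδ0.trans_le (hδ.trans hR)
  have ht : δ ^ 2 / (2 * R * s) ∈ Set.Icc (0 : ℝ) 1 := by
    refine ⟨by positivity, (div_le_one (by positivity)).2 ?_⟩
    nlinarith [hδ.trans hR, hδ.trans hle]
  have hinner : δ ^ 2 * s ≤ 2 * inner ℝ (p - p') (v - p') * R := by
    have := sq_dist_mul_dist_le_two_mul_inner_mul_dist hδ hle
    nlinarith [mul_le_mul_of_nonneg_left hR (by positivity : 0 ≤ δ ^ 2 * s)]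
  refine ⟨p' + (δ ^ 2 / (2 * R * s)) • (v - p'), ?_, ?_⟩
  · simpa [AffineMap.lineMap_apply_module', add_comm] using lineMap_mem_segment ℝ p' v ht
  calc dist p (p' + (δ ^ 2 / (2 * R * s)) • (v - p')) ^ 2
      = δ ^ 2 - δ ^ 2 * (2 * inner ℝ (p - p') (v - p') * R) / (2 * R ^ 2 * s)
          + δ ^ 4 / (4 * R ^ 2) := by
        rw [dist_add_smul_sub_sq]
        change δ ^ 2 - 2 * (δ ^ 2 / (2 * R * s)) * _ + (δ ^ 2 / (2 * R * s)) ^ 2 * s ^ 2 = _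
        field_simp; ring
    _ ≤ δ ^ 2 - δ ^ 2 * (δ ^ 2 * s) / (2 * R ^ 2 * s) + δ ^ 4 / (4 * R ^ 2) := by gcongr
    _ = δ ^ 2 * (1 - δ ^ 2 / (4 * R ^ 2)) := by field_simp; ring

end InnerProductSpace

theorem gap_reduction_exp_general {m : ℕ} (p p' v : EuclideanSpace ℝ (Fin m))
    (hpp' : p ≠ p')
    (hle : dist p v ≤ dist p' v)
    (p'' : EuclideanSpace ℝ (Fin m))
    (hclosest : ∀ x ∈ segment ℝ p' v, dist p p'' ≤ dist p x)
    (R : ℝ) (hR : dist p v ≤ R)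
    (hδr : dist p p' ≤ dist p v) :
    dist p p'' ≤ dist p p' * Real.sqrt (1 - (dist p p') ^ 2 / (4 * R ^ 2)) ∧
      dist p p' * Real.sqrt (1 - (dist p p') ^ 2 / (4 * R ^ 2)) <
        dist p p' * Real.exp (-(dist p p') ^ 2 / (8 * R ^ 2)) := by
  have hδ : 0 < dist p p' := dist_pos.2 hpp'
  have hR0 : 0 < R := hδ.trans_le (hδr.trans hR)
  obtain ⟨x, hx, hdist⟩ := exists_mem_segment_sq_dist_le hδr hle hR
  refine ⟨?_, ?_⟩
  · calc dist p p'' ≤ dist p x := hclosest x hx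
      _ = √(dist p x ^ 2) := (sqrt_sq dist_nonneg).symm
      _ ≤ √(dist p p' ^ 2 * (1 - dist p p' ^ 2 / (4 * R ^ 2))) := sqrt_le_sqrt hdist
      _ = dist p p' * √(1 - dist p p' ^ 2 / (4 * R ^ 2)) := by
        rw [sqrt_mul (sq_nonneg _), sqrt_sq hδ.le]
  · rw [show -dist p p' ^ 2 / (8 * R ^ 2) = -(dist p p' ^ 2 / (4 * R ^ 2)) / 2 by ring]
    exact mul_lt_mul_of_pos_left (sqrt_one_sub_lt_exp_neg_half (by positivity)) hδ

/-- **Gap reduction with exponential bound**. In the setting of the gap-reduction theorem,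
with `R ≥ r = d(p,v)`: if `δ ≤ r`, then
`δ' ≤ δ·√(1 - δ²/(4R²)) < δ·exp(-δ²/(8R²))`. -/
theorem gap_reduction_exp {m : ℕ} (p p' v : EuclideanSpace ℝ (Fin m))
    (hpp' : p ≠ p') (hpv : p ≠ v) (hp'v : p' ≠ v)
    (hle : dist p v ≤ dist p' v)
    (p'' : EuclideanSpace ℝ (Fin m)) (hseg : p'' ∈ segment ℝ p' v)
    (hclosest : ∀ x ∈ segment ℝ p' v, dist p p'' ≤ dist p x)
    (hne : p'' ≠ v)
    (R : ℝ) (hR : dist p v ≤ R)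
    (hδr : dist p p' ≤ dist p v) :
    dist p p'' ≤ dist p p' * Real.sqrt (1 - (dist p p') ^ 2 / (4 * R ^ 2)) ∧
      dist p p' * Real.sqrt (1 - (dist p p') ^ 2 / (4 * R ^ 2)) <
        dist p p' * Real.exp (-(dist p p') ^ 2 / (8 * R ^ 2)) :=
  gap_reduction_exp_general p p' v hpp' hle p'' hclosest R hR hδr
end

section
/- (Strict Distance Duality) Let S = {v_1, ..., v_n} be a finite nonempty set of points in ℝ^m and let p ∈ ℝ^m with p ∉ S. Then p ∈ conv(S) if and only if for every p' ∈ conv(S) there exists v_j ∈ S such that (p' − p)ᵀ(v_j − p) ≤ 0 (i.e., the angle ∠p'pv_j is at least π/2; such a v_j is called a strict p-pivot). -/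
/-!
If `p` lies in the hull, no open half-space `{x | ⟪w, p⟫ < ⟪w, x⟫}` can contain every point of `S`,
so for `w = p' - p` some `v_j` sits at an obtuse angle. If `p` is outside the hull, let `q` be its
nearest point in the (compact, convex) hull: the obtuse-angle characterisation of the projection
gives `⟪q - p, x - p⟫ ≥ ‖q - p‖² > 0` for every `x` in the hull, so `p' = q` has no pivot.
-/

open Set

open scoped RealInnerProductSpace

variable {E : Type*} [NormedAddCommGroup E] [InnerProductSpace ℝ E]

theorem exists_inner_sub_nonpos_of_mem_convexHull {s : Set E} {p : E}
    (hp : p ∈ convexHull ℝ s) (w : E) : ∃ x ∈ s, ⟪w, x - p⟫ ≤ 0 := by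
  by_contra! h
  have hs : s ⊆ {x | ⟪w, p⟫ < ⟪w, x⟫} := fun x hx => by
    have := h x hx
    rw [inner_sub_right] at this
    exact sub_pos.mp this
  exact lt_irrefl ⟪w, p⟫ (convexHull_min hs (convex_halfSpace_gt (innerₛₗ ℝ w).isLinear _) hp)

theorem exists_mem_forall_inner_sub_pos_of_notMem {K : Set E} (hne : K.Nonempty)
    (hc : IsComplete K) (hK : Convex ℝ K) {p : E} (hp : p ∉ K) :
    ∃ q ∈ K, ∀ x ∈ K, 0 < ⟪q - p, x - p⟫ := by
  obtain ⟨q, hq, hmin⟩ := exists_norm_eq_iInf_of_complete_convex hne hc hK p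
  have hproj := (norm_eq_iInf_iff_real_inner_le_zero hK hq).mp hmin
  refine ⟨q, hq, fun x hx => ?_⟩
  have hqp : q - p ≠ 0 := sub_ne_zero.mpr (ne_of_mem_of_not_mem hq hp)
  have hobtuse : 0 ≤ ⟪q - p, x - q⟫ := by
    rw [← neg_sub p q, inner_neg_left]
    exact neg_nonneg.mpr (hproj x hx)
  calc 0 < ⟪q - p, x - q⟫ + ⟪q - p, q - p⟫ := by
        have := real_inner_self_pos.mpr hqp
        linarith
    _ = ⟪q - p, x - p⟫ := by rw [← inner_add_right, sub_add_sub_cancel]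

theorem Set.Finite.mem_convexHull_iff_forall_exists_inner_sub_nonpos {s : Set E}
    (hs : s.Finite) (hne : s.Nonempty) {p : E} :
    p ∈ convexHull ℝ s ↔ ∀ p' ∈ convexHull ℝ s, ∃ x ∈ s, ⟪p' - p, x - p⟫ ≤ 0 := by
  refine ⟨fun hp p' _ => exists_inner_sub_nonpos_of_mem_convexHull hp (p' - p), fun h => ?_⟩
  by_contra hp
  obtain ⟨q, hq, hpos⟩ := exists_mem_forall_inner_sub_pos_of_notMem hne.convexHull
    (hs.isCompact_convexHull ℝ).isComplete (convex_convexHull ℝ s) hp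
  obtain ⟨x, hx, hpivot⟩ := h q hq
  exact hpivot.not_gt (hpos x (subset_convexHull ℝ s hx))

theorem strict_distance_duality_general {m n : ℕ} (hn : 0 < n)
    (v : Fin n → EuclideanSpace ℝ (Fin m)) (p : EuclideanSpace ℝ (Fin m)) :
    p ∈ convexHull ℝ (Set.range v) ↔
      ∀ p' ∈ convexHull ℝ (Set.range v),
        ∃ j : Fin n, inner ℝ (p' - p) (v j - p) ≤ (0 : ℝ) := by
  have : Nonempty (Fin n) := ⟨⟨0, hn⟩⟩
  rw [(finite_range v).mem_convexHull_iff_forall_exists_inner_sub_nonpos (range_nonempty v)]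
  simp only [exists_range_iff]

/-- **Strict Distance Duality**. Assume `p ∉ S`. Then `p ∈ conv(S)` iff for every
`p' ∈ conv(S)` there exists a strict `p`-pivot `v j`, i.e. `⟪p' - p, v j - p⟫ ≤ 0`. -/
theorem strict_distance_duality {m n : ℕ} (hn : 0 < n)
    (v : Fin n → EuclideanSpace ℝ (Fin m)) (p : EuclideanSpace ℝ (Fin m))
    (hpS : p ∉ Set.range v) :
    p ∈ convexHull ℝ (Set.range v) ↔
      ∀ p' ∈ convexHull ℝ (Set.range v),
        ∃ j : Fin n, inner ℝ (p' - p) (v j - p) ≤ (0 : ℝ) :=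
  strict_distance_duality_general hn v p
end

section
/- (Gap reduction with a strict pivot) Let p, p', v be three distinct points in ℝ^m with (p' − p)ᵀ(v − p) ≤ 0. Set δ = d(p, p'), r = d(p, v), and assume δ ≤ r. Let p'' be the point on the segment from p' to v closest to p and δ' = d(p, p''). Then δ' ≤ δ·r/√(r² + δ²) ≤ δ·√(1 − δ²/(2r²)) ≤ δ·exp(−δ²/(4r²)). -/
/-!
The points of the segment are `p + (1 - t) (p' - p) + t (v - p)`; the pivot condition makes the
cross term of `‖(1 - t) (p' - p) + t (v - p)‖²` nonpositive, so this squared distance is at most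
`(1 - t)² δ² + t² r²`, which at `t = δ² / (r² + δ²)` (the foot of the perpendicular when the
angle at `p` is right) equals `δ² r² / (r² + δ²)`. The other two bounds are `r² + δ² ≤ 2 r²` and
`1 - x ≤ e⁻ˣ`.
-/

open Real
open scoped InnerProductSpace

section InnerProductSpace

variable {E : Type*} [NormedAddCommGroup E] [InnerProductSpace ℝ E]

theorem norm_sq_smul_add_smul_le_of_inner_nonpos {a b : E} (hab : ⟪a, b⟫_ℝ ≤ 0) {t : ℝ}
    (ht₀ : 0 ≤ t) (ht₁ : t ≤ 1) :
    ‖(1 - t) • a + t • b‖ ^ 2 ≤ (1 - t) ^ 2 * ‖a‖ ^ 2 + t ^ 2 * ‖b‖ ^ 2 := by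
  have hcross : (1 - t) * t * ⟪a, b⟫_ℝ ≤ 0 :=
    mul_nonpos_of_nonneg_of_nonpos (mul_nonneg (by linarith) ht₀) hab
  rw [norm_add_sq_real, norm_smul, norm_smul, real_inner_smul_left, real_inner_smul_right,
    Real.norm_of_nonneg (by linarith), Real.norm_of_nonneg ht₀]
  nlinarith

theorem exists_mem_segment_norm_le_of_inner_nonpos {a b : E} (hab : ⟪a, b⟫_ℝ ≤ 0) :
    ∃ x ∈ segment ℝ a b, ‖x‖ ≤ ‖a‖ * ‖b‖ / √(‖b‖ ^ 2 + ‖a‖ ^ 2) := by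
  rcases eq_or_ne a 0 with rfl | ha
  · exact ⟨0, left_mem_segment ℝ 0 b, by simp⟩
  have hS : 0 < ‖b‖ ^ 2 + ‖a‖ ^ 2 := by positivity
  set t := ‖a‖ ^ 2 / (‖b‖ ^ 2 + ‖a‖ ^ 2)
  have ht₀ : 0 ≤ t := by positivity
  have ht₁ : t ≤ 1 := (div_le_one hS).2 (by nlinarith [sq_nonneg ‖b‖])
  refine ⟨(1 - t) • a + t • b, ⟨1 - t, t, by linarith, ht₀, by ring, rfl⟩, ?_⟩
  have hsq : (1 - t) ^ 2 * ‖a‖ ^ 2 + t ^ 2 * ‖b‖ ^ 2 = (‖a‖ * ‖b‖) ^ 2 / (‖b‖ ^ 2 + ‖a‖ ^ 2) := by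
    simp only [t]
    field_simp
    ring
  rw [← Real.sqrt_sq (norm_nonneg _), ← Real.sqrt_sq (by positivity : 0 ≤ ‖a‖ * ‖b‖),
    ← Real.sqrt_div' _ hS.le, ← hsq]
  exact Real.sqrt_le_sqrt (norm_sq_smul_add_smul_le_of_inner_nonpos hab ht₀ ht₁)

theorem exists_mem_segment_dist_le_of_inner_nonpos {p a b : E} (h : ⟪a - p, b - p⟫_ℝ ≤ 0) :
    ∃ x ∈ segment ℝ a b, dist p x ≤ dist p a * dist p b / √(dist p b ^ 2 + dist p a ^ 2) := by
  obtain ⟨x, hx, hle⟩ := exists_mem_segment_norm_le_of_inner_nonpos h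
  refine ⟨p + x, ?_, ?_⟩
  · simpa using (mem_segment_translate ℝ p).2 hx
  · simpa [dist_eq_norm_sub', norm_sub_rev p] using hle

end InnerProductSpace

theorem div_sqrt_sq_add_sq_le_sqrt_one_sub {δ r : ℝ} (hr : 0 < r) (hδr : δ ^ 2 ≤ r ^ 2) :
    r / √(r ^ 2 + δ ^ 2) ≤ √(1 - δ ^ 2 / (2 * r ^ 2)) := by
  have hS : 0 < r ^ 2 + δ ^ 2 := by positivity
  have hratio : r ^ 2 / (r ^ 2 + δ ^ 2) = 1 - δ ^ 2 / (r ^ 2 + δ ^ 2) := by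
    field_simp
    ring
  rw [show r / √(r ^ 2 + δ ^ 2) = √(r ^ 2 / (r ^ 2 + δ ^ 2)) by
    rw [Real.sqrt_div' _ hS.le, Real.sqrt_sq hr.le], hratio]
  gcongr
  linarith

theorem sqrt_one_sub_le_exp_neg_half (x : ℝ) : √(1 - x) ≤ exp (-x / 2) := by
  rw [exp_half]
  exact Real.sqrt_le_sqrt (by linarith [add_one_le_exp (-x)])

theorem gap_reduction_strict_pivot_general {m : ℕ} (p p' v : EuclideanSpace ℝ (Fin m))
    (hpv : p ≠ v)
    (hpivot : inner ℝ (p' - p) (v - p) ≤ (0 : ℝ))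
    (hδr : dist p p' ≤ dist p v)
    (p'' : EuclideanSpace ℝ (Fin m))
    (hclosest : ∀ x ∈ segment ℝ p' v, dist p p'' ≤ dist p x) :
    dist p p'' ≤ dist p p' * dist p v / Real.sqrt ((dist p v) ^ 2 + (dist p p') ^ 2) ∧
    dist p p' * dist p v / Real.sqrt ((dist p v) ^ 2 + (dist p p') ^ 2) ≤
      dist p p' * Real.sqrt (1 - (dist p p') ^ 2 / (2 * (dist p v) ^ 2)) ∧
    dist p p' * Real.sqrt (1 - (dist p p') ^ 2 / (2 * (dist p v) ^ 2)) ≤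
      dist p p' * Real.exp (-(dist p p') ^ 2 / (4 * (dist p v) ^ 2)) := by
  have hδ : 0 ≤ dist p p' := dist_nonneg
  have hr : 0 < dist p v := dist_pos.2 hpv
  obtain ⟨x, hx, hpx⟩ := exists_mem_segment_dist_le_of_inner_nonpos hpivot
  refine ⟨(hclosest x hx).trans hpx, ?_, ?_⟩
  · rw [mul_div_assoc]
    exact mul_le_mul_of_nonneg_left
      (div_sqrt_sq_add_sq_le_sqrt_one_sub hr (pow_le_pow_left₀ hδ hδr 2)) hδ
  · exact mul_le_mul_of_nonneg_left
      ((sqrt_one_sub_le_exp_neg_half _).trans_eq (congr_arg exp (by ring))) hδ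

/-- **Gap reduction with a strict pivot**. If `v` is a strict pivot at `p'`
(`⟪p' - p, v - p⟫ ≤ 0`), `δ = d(p,p') ≤ r = d(p,v)`, and `p''` is the point of the
segment `p'v` closest to `p`, then
`δ' ≤ δr/√(r² + δ²) ≤ δ√(1 - δ²/(2r²)) ≤ δ·exp(-δ²/(4r²))`. -/
theorem gap_reduction_strict_pivot {m : ℕ} (p p' v : EuclideanSpace ℝ (Fin m))
    (hpp' : p ≠ p') (hpv : p ≠ v) (hp'v : p' ≠ v)
    (hpivot : inner ℝ (p' - p) (v - p) ≤ (0 : ℝ))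
    (hδr : dist p p' ≤ dist p v)
    (p'' : EuclideanSpace ℝ (Fin m)) (hseg : p'' ∈ segment ℝ p' v)
    (hclosest : ∀ x ∈ segment ℝ p' v, dist p p'' ≤ dist p x) :
    dist p p'' ≤ dist p p' * dist p v / Real.sqrt ((dist p v) ^ 2 + (dist p p') ^ 2) ∧
    dist p p' * dist p v / Real.sqrt ((dist p v) ^ 2 + (dist p p') ^ 2) ≤
      dist p p' * Real.sqrt (1 - (dist p p') ^ 2 / (2 * (dist p v) ^ 2)) ∧
    dist p p' * Real.sqrt (1 - (dist p p') ^ 2 / (2 * (dist p v) ^ 2)) ≤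
      dist p p' * Real.exp (-(dist p p') ^ 2 / (4 * (dist p v) ^ 2)) :=
  gap_reduction_strict_pivot_general p p' v hpv hpivot hδr p'' hclosest
end

section
/- (Minimax characterization of homogeneous feasibility) Let A be a real m × n matrix with columns a_1, ..., a_n, and let Σ_n = {x ∈ ℝ^n : Σ_{i=1}^n x_i = 1, x ≥ 0} be the standard simplex. Then the set {x ∈ Σ_n : Ax = 0} is nonempty if and only if max_{x ∈ Σ_n} min_{y ∈ Σ_n} yᵀAᵀAx ≤ 0 (the maximum and minimum are attained since Σ_n is compact and the function is bilinear). -/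
/-!
If `Ax₀ = 0` with `x₀ ∈ Σₙ`, then choosing `y = x₀` makes every inner minimum at most `0`.
Conversely, let `Ax` be the point of least norm of the compact convex set `A Σₙ`. The
variational inequality of the projection onto `A Σₙ` gives `⟪Ay, Ax⟫ ≥ ‖Ax‖²` for all `y ∈ Σₙ`,
so the max-min value is at least `‖Ax‖² ≥ 0`, which forces `Ax = 0`.
-/

open Matrix

theorem exists_mem_forall_real_inner_self_le {E : Type*} [NormedAddCommGroup E]
    [InnerProductSpace ℝ E] {K : Set E} (hne : K.Nonempty) (hcomplete : IsComplete K)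
    (hconvex : Convex ℝ K) : ∃ v ∈ K, ∀ w ∈ K, inner ℝ v v ≤ inner ℝ v w := by
  obtain ⟨v, hv, hmin⟩ := exists_norm_eq_iInf_of_complete_convex hne hcomplete hconvex 0
  refine ⟨v, hv, fun w hw => ?_⟩
  have h := (norm_eq_iInf_iff_real_inner_le_zero hconvex hv).mp hmin w hw
  rw [zero_sub, inner_neg_left, inner_sub_right] at h
  linarith

theorem exists_mem_stdSimplex_forall_dotProduct_mulVec_le {ι κ : Type*} [Fintype ι]
    [Fintype κ] [Nonempty ι] (A : Matrix κ ι ℝ) :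
    ∃ x ∈ stdSimplex ℝ ι, ∀ y ∈ stdSimplex ℝ ι, A *ᵥ x ⬝ᵥ A *ᵥ x ≤ A *ᵥ y ⬝ᵥ A *ᵥ x := by
  let f : (ι → ℝ) →ₗ[ℝ] EuclideanSpace ℝ κ :=
    (WithLp.linearEquiv 2 ℝ (κ → ℝ)).symm.toLinearMap ∘ₗ A.mulVecLin
  have hK : IsCompact (f '' stdSimplex ℝ ι) :=
    (isCompact_stdSimplex ℝ ι).image f.continuous_of_finiteDimensional
  obtain ⟨_, ⟨x, hx, rfl⟩, hmin⟩ := exists_mem_forall_real_inner_self_le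
    ((isPathConnected_stdSimplex ι).nonempty.image f) hK.isComplete
    ((convex_stdSimplex ℝ ι).linear_image f)
  exact ⟨x, hx, fun y hy => hmin (f y) ⟨y, hy, rfl⟩⟩

theorem bddAbove_range_iInf {X Y : Type*} [TopologicalSpace X] [CompactSpace X]
    [TopologicalSpace Y] [CompactSpace Y] [Nonempty Y] {f : X → Y → ℝ}
    (hf : ∀ x, Continuous (f x)) (hf' : ∀ y, Continuous (f · y)) :
    BddAbove (Set.range fun x => ⨅ y, f x y) := by
  let y₀ : Y := Classical.arbitrary Y
  obtain ⟨M, hM⟩ := (isCompact_range (hf' y₀)).bddAbove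
  refine ⟨M, ?_⟩
  rintro _ ⟨x, rfl⟩
  exact (ciInf_le (isCompact_range (hf x)).bddBelow y₀).trans (hM ⟨x, rfl⟩)

/-- **Minimax characterization of homogeneous feasibility**. The set
`{x ∈ Σₙ : Ax = 0}` is nonempty iff `max_{x ∈ Σₙ} min_{y ∈ Σₙ} yᵀAᵀAx ≤ 0`. -/
theorem minimax_homogeneous_feasibility {m n : ℕ} (hn : 0 < n)
    (A : Matrix (Fin m) (Fin n) ℝ) :
    (∃ x ∈ stdSimplex ℝ (Fin n), A.mulVec x = 0) ↔
      (⨆ x : stdSimplex ℝ (Fin n), ⨅ y : stdSimplex ℝ (Fin n),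
        dotProduct (A.mulVec (y : Fin n → ℝ)) (A.mulVec (x : Fin n → ℝ))) ≤ 0 := by
  have : Nonempty (Fin n) := ⟨⟨0, hn⟩⟩
  have : CompactSpace (stdSimplex ℝ (Fin n)) :=
    isCompact_iff_compactSpace.mp (isCompact_stdSimplex ℝ (Fin n))
  have hcont : ∀ v w : stdSimplex ℝ (Fin n) → Fin n → ℝ, Continuous v → Continuous w →
      Continuous fun z => A *ᵥ v z ⬝ᵥ A *ᵥ w z := fun v w hv hw =>
    (continuous_const.matrix_mulVec hv).dotProduct (continuous_const.matrix_mulVec hw)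
  have hbdd (x : stdSimplex ℝ (Fin n)) :
      BddBelow (Set.range fun y : stdSimplex ℝ (Fin n) => A *ᵥ y.val ⬝ᵥ A *ᵥ x.val) :=
    (isCompact_range (hcont _ (fun _ => x) continuous_subtype_val continuous_const)).bddBelow
  constructor
  · rintro ⟨x₀, hx₀, hAx₀⟩
    refine ciSup_le fun x => (ciInf_le (hbdd x) ⟨x₀, hx₀⟩).trans ?_
    simp [hAx₀]
  · intro h
    obtain ⟨x, hx, hmin⟩ := exists_mem_stdSimplex_forall_dotProduct_mulVec_le A
    refine ⟨x, hx, dotProduct_self_eq_zero.mp (le_antisymm ?_ (dotProduct_self_star_nonneg _))⟩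
    calc A *ᵥ x ⬝ᵥ A *ᵥ x ≤ ⨅ y : stdSimplex ℝ (Fin n), A *ᵥ y ⬝ᵥ A *ᵥ x :=
          le_ciInf fun y => hmin y y.2
      _ ≤ _ := le_ciSup (bddAbove_range_iInf (fun x => hcont _ _ continuous_subtype_val
          continuous_const) (fun y => hcont _ _ continuous_const continuous_subtype_val)) ⟨x, hx⟩
      _ ≤ 0 := h
end

section
/- (Good strict pivot when a ball around p lies in the hull) Let S = {v_1, ..., v_n} be a finite nonempty set of points in ℝ^m, p ∈ ℝ^m, and R = max{d(p, v_i) : i = 1, ..., n}. Suppose ρ > 0 and the closed Euclidean ball of radius ρ centered at p is contained in conv(S). Then for every p' ∈ conv(S) with p' ≠ p there exists v ∈ S such that (p' − p)ᵀ(v − p) ≤ 0 and the distance from p to the line through p' and v is at most d(p, p')/√(1 + ρ²/R²). -/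
/-!
A linear functional on `conv(S)` is minimised at a vertex. Minimising `⟪p' - p, ·⟫` and comparing
with the point `p - ρ (p' - p)/‖p' - p‖` of the ball gives a vertex `v` with
`⟪p' - p, v - p⟫ ≤ -ρ ‖p' - p‖`. As `‖p' - v‖ ≤ ‖p' - p‖ + R`, the cosine of the angle at `p'`
between `p` and `v` is at least `(‖p' - p‖ + ρ)/(‖p' - p‖ + R) ≥ ρ/R`, so the distance from `p`
to the line is at most `‖p' - p‖ √(1 - ρ²/R²) ≤ ‖p' - p‖ / √(1 + ρ²/R²)`.
-/

open Real Set Metric RealInnerProductSpace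

theorem sq_sub_div_sq_le_div {S ρ R c d : ℝ} (hS : 0 ≤ S) (hρ : 0 < ρ) (hρR : ρ ≤ R)
    (hc : S * (S + ρ) ≤ c) (hcd : c ≤ S * d) (hd : d ≤ S + R) :
    S ^ 2 - c ^ 2 / d ^ 2 ≤ S ^ 2 / (1 + ρ ^ 2 / R ^ 2) := by
  rcases hS.eq_or_lt with rfl | hS
  · rw [zero_pow two_ne_zero, zero_div, zero_sub, neg_nonpos]
    positivity
  have hR : 0 < R := hρ.trans_le hρR
  have hd0 : 0 < d := by nlinarith
  have hproj : S * ρ / R ≤ c / d := by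
    rw [div_le_div_iff₀ hR hd0]
    nlinarith [mul_le_mul_of_nonneg_left hd (mul_nonneg hS.le hρ.le),
      mul_le_mul_of_nonneg_left hρR (sq_nonneg S), mul_le_mul_of_nonneg_left hc hR.le]
  calc S ^ 2 - c ^ 2 / d ^ 2 = S ^ 2 - (c / d) ^ 2 := by rw [div_pow]
    _ ≤ S ^ 2 - (S * ρ / R) ^ 2 := by gcongr
    _ = S ^ 2 * (1 - ρ ^ 2 / R ^ 2) := by ring
    _ ≤ S ^ 2 / (1 + ρ ^ 2 / R ^ 2) := by
        rw [le_div_iff₀ (by positivity)]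
        nlinarith [mul_nonneg (sq_nonneg S) (sq_nonneg (ρ ^ 2 / R ^ 2))]

section

variable {E : Type*} [NormedAddCommGroup E] [InnerProductSpace ℝ E]

theorem exists_inner_le_of_mem_convexHull {s : Set E} {x : E} (hx : x ∈ convexHull ℝ s) (a : E) :
    ∃ y ∈ s, ⟪a, y⟫ ≤ ⟪a, x⟫ :=
  ((innerₛₗ ℝ a).concaveOn convex_univ).exists_le_of_mem_convexHull (subset_univ _) hx

theorem norm_sub_inner_div_smul_sq (a b : E) :
    ‖a - (⟪a, b⟫ / ‖b‖ ^ 2) • b‖ ^ 2 = ‖a‖ ^ 2 - ⟪a, b⟫ ^ 2 / ‖b‖ ^ 2 := by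
  rcases eq_or_ne b 0 with rfl | hb
  · simp
  have hb' : ‖b‖ ≠ 0 := norm_ne_zero_iff.2 hb
  rw [norm_sub_sq_real, real_inner_smul_right, norm_smul, mul_pow, Real.norm_eq_abs, sq_abs]
  field_simp
  ring

theorem iInf_dist_line_le (p x y : E) :
    ⨅ t : ℝ, dist p ((1 - t) • x + t • y) ≤
      √(‖x - p‖ ^ 2 - ⟪x - p, x - y⟫ ^ 2 / ‖x - y‖ ^ 2) := by
  set t := ⟪x - p, x - y⟫ / ‖x - y‖ ^ 2
  have hline : dist p ((1 - t) • x + t • y) = ‖(x - p) - t • (x - y)‖ := by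
    rw [dist_comm, dist_eq_norm]
    congr 1
    module
  calc ⨅ t : ℝ, dist p ((1 - t) • x + t • y) ≤ dist p ((1 - t) • x + t • y) :=
        ciInf_le ⟨0, by rintro _ ⟨_, rfl⟩; exact dist_nonneg⟩ t
    _ = √(‖x - p‖ ^ 2 - ⟪x - p, x - y⟫ ^ 2 / ‖x - y‖ ^ 2) := by
        rw [hline, ← norm_sub_inner_div_smul_sq, Real.sqrt_sq (norm_nonneg _)]

theorem iInf_dist_line_le_of_inner_le {p x y : E} {ρ R : ℝ} (hρ : 0 < ρ) (hρR : ρ ≤ R)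
    (hy : dist p y ≤ R) (hxy : ⟪x - p, y - p⟫ ≤ -(ρ * ‖x - p‖)) :
    ⨅ t : ℝ, dist p ((1 - t) • x + t • y) ≤ dist p x / √(1 + ρ ^ 2 / R ^ 2) := by
  have hc : ‖x - p‖ * (‖x - p‖ + ρ) ≤ ⟪x - p, x - y⟫ := by
    rw [← sub_sub_sub_cancel_right x y p, inner_sub_right, real_inner_self_eq_norm_sq]
    linarith
  have hd : ‖x - y‖ ≤ ‖x - p‖ + R := by
    rw [← dist_eq_norm, ← dist_eq_norm]
    linarith [dist_triangle x p y]
  calc ⨅ t : ℝ, dist p ((1 - t) • x + t • y)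
      ≤ √(‖x - p‖ ^ 2 - ⟪x - p, x - y⟫ ^ 2 / ‖x - y‖ ^ 2) := iInf_dist_line_le p x y
    _ ≤ √(‖x - p‖ ^ 2 / (1 + ρ ^ 2 / R ^ 2)) :=
        Real.sqrt_le_sqrt <| sq_sub_div_sq_le_div (norm_nonneg _) hρ hρR hc
          (real_inner_le_norm _ _) hd
    _ = dist p x / √(1 + ρ ^ 2 / R ^ 2) := by
        rw [Real.sqrt_div' _ (by positivity), Real.sqrt_sq (norm_nonneg _), dist_comm,
          dist_eq_norm]

end

theorem good_strict_pivot_of_ball_general {m n : ℕ}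
    (v : Fin n → EuclideanSpace ℝ (Fin m)) (p : EuclideanSpace ℝ (Fin m))
    (R : ℝ) (hR : IsGreatest (Set.range fun i => dist p (v i)) R)
    (ρ : ℝ) (hρ : 0 < ρ)
    (hball : Metric.closedBall p ρ ⊆ convexHull ℝ (Set.range v)) :
    ∀ p' ∈ convexHull ℝ (Set.range v), p' ≠ p →
      ∃ j : Fin n, inner ℝ (p' - p) (v j - p) ≤ (0 : ℝ) ∧
        (⨅ t : ℝ, dist p ((1 - t) • p' + t • v j)) ≤
          dist p p' / Real.sqrt (1 + ρ ^ 2 / R ^ 2) := by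
  intro p' _ hne
  set a := p' - p
  have ha : 0 < ‖a‖ := norm_pos_iff.2 (sub_ne_zero.2 hne)
  set q := p - (ρ / ‖a‖) • a
  have hqp : dist q p = ρ := by
    rw [dist_eq_norm, sub_sub_cancel_left, norm_neg, norm_smul, Real.norm_of_nonneg (by positivity),
      div_mul_cancel₀ _ ha.ne']
  have hq : q ∈ convexHull ℝ (Set.range v) := hball (mem_closedBall.2 hqp.le)
  have hρR : ρ ≤ R := by
    obtain ⟨_, ⟨i, rfl⟩, hi⟩ := convexHull_exists_dist_ge hq p
    rw [hqp, dist_comm] at hi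
    exact hi.trans (hR.2 ⟨i, rfl⟩)
  have hqa : ⟪a, q - p⟫ = -(ρ * ‖a‖) := by
    rw [sub_sub_cancel_left, inner_neg_right, real_inner_smul_right, real_inner_self_eq_norm_sq]
    field_simp
  obtain ⟨_, ⟨j, rfl⟩, hj⟩ := exists_inner_le_of_mem_convexHull hq a
  have hjq : ⟪a, v j - p⟫ ≤ -(ρ * ‖a‖) := by
    rw [← hqa, inner_sub_right, inner_sub_right]
    linarith
  exact ⟨j, hjq.trans (neg_nonpos.2 (by positivity)),
    iInf_dist_line_le_of_inner_le hρ hρR (hR.2 ⟨j, rfl⟩) hjq⟩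

/-- **Good strict pivot when a ball around `p` lies in the hull**. If the closed ball of
radius `ρ > 0` centered at `p` lies in `conv(S)` and `R = max d(p, v i)`, then every
`p' ∈ conv(S)`, `p' ≠ p`, admits a strict pivot `v` with the distance from `p` to the
line through `p'` and `v` at most `d(p,p')/√(1 + ρ²/R²)`. -/
theorem good_strict_pivot_of_ball {m n : ℕ} (hn : 0 < n)
    (v : Fin n → EuclideanSpace ℝ (Fin m)) (p : EuclideanSpace ℝ (Fin m))
    (R : ℝ) (hR : IsGreatest (Set.range fun i => dist p (v i)) R)
    (ρ : ℝ) (hρ : 0 < ρ)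
    (hball : Metric.closedBall p ρ ⊆ convexHull ℝ (Set.range v)) :
    ∀ p' ∈ convexHull ℝ (Set.range v), p' ≠ p →
      ∃ j : Fin n, inner ℝ (p' - p) (v j - p) ≤ (0 : ℝ) ∧
        (⨅ t : ℝ, dist p ((1 - t) • p' + t • v j)) ≤
          dist p p' / Real.sqrt (1 + ρ ^ 2 / R ^ 2) :=
  good_strict_pivot_of_ball_general v p R hR ρ hρ hball
end

section
/- (Reduction of LP feasibility to a convex hull decision problem) Let A be a real m × n matrix with columns a_1, ..., a_n and let b ∈ ℝ^m. Suppose 0 ∉ conv({a_1, ..., a_n}). Then the set Ω = {x ∈ ℝ^n : Ax = b, x ≥ 0} is nonempty if and only if 0 ∈ conv({a_1, ..., a_n, −b}). -/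
open Finset

private lemma mulVec_eq_sum_smul_col {m n : ℕ} (A : Matrix (Fin m) (Fin n) ℝ)
    (x : Fin n → ℝ) : A.mulVec x = ∑ j, x j • A.transpose j := by
  funext k
  simp [Matrix.mulVec, dotProduct, Matrix.transpose, mul_comm]

/-- **Reduction of LP feasibility to a convex hull decision problem**. If
`0 ∉ conv({a 1, …, a n})` (the columns of `A`), then `Ω = {x : Ax = b, x ≥ 0}` is
nonempty iff `0 ∈ conv({a 1, …, a n, -b})`. -/
theorem lp_feasibility_reduction {m n : ℕ} (A : Matrix (Fin m) (Fin n) ℝ)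
    (b : Fin m → ℝ)
    (h0 : (0 : Fin m → ℝ) ∉ convexHull ℝ (Set.range fun i => A.transpose i)) :
    (∃ x : Fin n → ℝ, A.mulVec x = b ∧ ∀ i, 0 ≤ x i) ↔
      (0 : Fin m → ℝ) ∈
        convexHull ℝ (insert (-b) (Set.range fun i => A.transpose i)) := by
  classical
  constructor
  · rintro ⟨x, hAx, hx⟩
    have hsum : (0:ℝ) < ∑ i : Fin (n+1), Fin.cases 1 x i := by
      rw [Fin.sum_univ_succ]
      simp only [Fin.cases_zero, Fin.cases_succ]
      have : (0:ℝ) ≤ ∑ i, x i := Finset.sum_nonneg fun i _ => hx i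
      linarith
    have hcm := Finset.centerMass_mem_convexHull (Finset.univ : Finset (Fin (n+1)))
      (s := insert (-b) (Set.range fun i => A.transpose i))
      (w := Fin.cases 1 x) (z := Fin.cases (-b) (fun i => A.transpose i))
      (fun i _ => by
        induction i using Fin.cases with
        | zero => simp
        | succ j => simpa using hx j)
      hsum
      (fun i _ => by
        induction i using Fin.cases with
        | zero => exact Set.mem_insert _ _
        | succ j => exact Set.mem_insert_of_mem _ (Set.mem_range_self j))
    have hzero : (Finset.univ : Finset (Fin (n+1))).centerMass (Fin.cases 1 x)
        (Fin.cases (-b) (fun i => A.transpose i)) = 0 := by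
      rw [Finset.centerMass]
      have : ∑ i : Fin (n+1), (Fin.cases 1 x i : ℝ) •
          (Fin.cases (-b) (fun i => A.transpose i) : Fin (n+1) → Fin m → ℝ) i = 0 := by
        rw [Fin.sum_univ_succ]
        simp only [Fin.cases_zero, Fin.cases_succ, one_smul]
        rw [← mulVec_eq_sum_smul_col A x, hAx]
        abel
      rw [this, smul_zero]
    rw [hzero] at hcm
    exact hcm
  · intro h
    rw [_root_.convexHull_eq] at h
    obtain ⟨ι, t, w, z, hw0, hw1, hz, hcm⟩ := h
    -- classify each point
    set f : ι → Option (Fin n) := fun i =>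
      if h : ∃ j, z i = A.transpose j then some h.choose else none with hf
    have hfz : ∀ i ∈ t, ∀ j, f i = some j → z i = A.transpose j := by
      intro i _ j hj
      by_cases h' : ∃ j, z i = A.transpose j
      · simp only [hf, dif_pos h'] at hj
        rw [← Option.some_inj.mp hj]
        exact h'.choose_spec
      · simp [hf, dif_neg h'] at hj
    have hfb : ∀ i ∈ t, f i = none → z i = -b := by
      intro i hi hn
      by_cases h' : ∃ j, z i = A.transpose j
      · simp [hf, dif_pos h'] at hn
      · rcases hz i hi with h1 | h1
        · exact h1
        · obtain ⟨j, hj⟩ := Set.mem_range.mp h1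
          exact (h' ⟨j, hj.symm⟩).elim
    set μ : ℝ := ∑ i ∈ t with f i = none, w i with hμ
    set c : Fin n → ℝ := fun j => ∑ i ∈ t with f i = some j, w i with hc
    have hcnn : ∀ j, 0 ≤ c j := fun j =>
      Finset.sum_nonneg fun i hi => hw0 i (Finset.mem_filter.mp hi).1
    have hμnn : 0 ≤ μ :=
      Finset.sum_nonneg fun i hi => hw0 i (Finset.mem_filter.mp hi).1
    -- total weight splits
    have htot : μ + ∑ j, c j = 1 := by
      have := Finset.sum_fiberwise t f w
      rw [Fintype.sum_option] at this
      rw [hμ, hc]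
      rw [this, hw1]
    -- the vector equation splits
    have hveceq : μ • (-b) + ∑ j, c j • A.transpose j = 0 := by
      have hsplit := Finset.sum_fiberwise t f (fun i => w i • z i)
      rw [Fintype.sum_option] at hsplit
      have h1 : ∑ i ∈ t with f i = none, w i • z i = μ • (-b) := by
        rw [hμ, Finset.sum_smul]
        refine Finset.sum_congr rfl fun i hi => ?_
        obtain ⟨hit, hfi⟩ := Finset.mem_filter.mp hi
        rw [hfb i hit hfi]
      have h2 : ∀ j, ∑ i ∈ t with f i = some j, w i • z i = c j • A.transpose j := by
        intro j
        rw [hc, Finset.sum_smul]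
        refine Finset.sum_congr rfl fun i hi => ?_
        obtain ⟨hit, hfi⟩ := Finset.mem_filter.mp hi
        rw [hfz i hit j hfi]
      have hsum0 : ∑ i ∈ t, w i • z i = 0 := by
        have := hcm
        rw [Finset.centerMass, hw1, inv_one, one_smul] at this
        exact this
      rw [h1] at hsplit
      calc μ • (-b) + ∑ j, c j • A.transpose j
          = μ • (-b) + ∑ j, ∑ i ∈ t with f i = some j, w i • z i := by
            rw [Finset.sum_congr rfl fun j _ => (h2 j).symm]
        _ = ∑ i ∈ t, w i • z i := hsplit
        _ = 0 := hsum0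
    by_cases hμ0 : μ = 0
    · exfalso
      apply h0
      have hc1 : ∑ j, c j = 1 := by rw [hμ0] at htot; linarith
      have hveceq' : ∑ j, c j • A.transpose j = 0 := by
        rw [hμ0, zero_smul, zero_add] at hveceq
        exact hveceq
      have := Finset.centerMass_mem_convexHull (Finset.univ : Finset (Fin n))
        (w := c) (z := fun j => A.transpose j)
        (fun j _ => hcnn j) (by rw [hc1]; norm_num)
        (fun j _ => Set.mem_range_self j)
      rwa [Finset.centerMass, hc1, inv_one, one_smul, hveceq'] at this
    · have hμpos : 0 < μ := lt_of_le_of_ne hμnn (Ne.symm hμ0)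
      refine ⟨fun j => c j / μ, ?_, fun j => div_nonneg (hcnn j) hμnn⟩
      rw [mulVec_eq_sum_smul_col]
      have : ∑ j, (c j / μ) • A.transpose j = μ⁻¹ • ∑ j, c j • A.transpose j := by
        rw [Finset.smul_sum]
        refine Finset.sum_congr rfl fun j _ => ?_
        rw [smul_smul, div_eq_inv_mul]
      rw [this]
      have h3 : ∑ j, c j • A.transpose j = μ • b := by
        have : μ • (-b) = -(μ • b) := by rw [smul_neg]
        rw [this] at hveceq
        linear_combination (norm := abel) hveceq
      rw [h3, smul_smul, inv_mul_cancel₀ hμ0, one_smul]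
end

section
/- (Sensitivity Theorem) Let A be a real m × n matrix with columns a_1, ..., a_n and b ∈ ℝ^m. Suppose 0 ∉ conv({a_1, ..., a_n}) and set Δ_0 = min{‖Ax‖ : Σ_{i=1}^n x_i = 1, x ≥ 0}, b_0 = ‖b‖, and R' = max{‖a_1‖, ..., ‖a_n‖, ‖b‖}. Let Δ_0' be any real with 0 < Δ_0' ≤ Δ_0, and let ε > 0 satisfy ε ≤ Δ_0'/(2R'). Suppose α_1, ..., α_{n+1} are nonnegative reals with Σ_{i=1}^{n+1} α_i = 1 such that the point p' = Σ_{i=1}^n α_i a_i − α_{n+1} b satisfies ‖p'‖ < εR'. Then α_{n+1} > 0, and the vector x_0 = (α_1/α_{n+1}, ..., α_n/α_{n+1})ᵀ ≥ 0 satisfies d(Ax_0, b) < ε'R', where ε' = 2(1 + b_0/Δ_0')ε. -/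
/-- **Sensitivity Theorem**. Suppose `0 ∉ conv({a 1, …, a n})`, with
`Δ₀ = min{‖Ax‖ : x ∈ Σₙ}`, `R' = max{‖a 1‖, …, ‖a n‖, ‖b‖}`, `0 < Δ₀' ≤ Δ₀`, and
`ε ≤ Δ₀'/(2R')`. If `α ≥ 0`, `∑ α = 1`, and `p' = ∑ αᵢ aᵢ - α_{n+1} b` satisfies
`‖p'‖ < εR'`, then `α_{n+1} > 0` and `x₀ = (α₁/α_{n+1}, …, αₙ/α_{n+1}) ≥ 0` satisfies
`d(Ax₀, b) < ε'R'` with `ε' = 2(1 + ‖b‖/Δ₀')ε`. -/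
theorem sensitivity_theorem {m n : ℕ}
    (a : Fin n → EuclideanSpace ℝ (Fin m)) (b : EuclideanSpace ℝ (Fin m))
    (h0 : (0 : EuclideanSpace ℝ (Fin m)) ∉ convexHull ℝ (Set.range a))
    (Δ₀ R' : ℝ)
    (hΔ₀ : IsLeast ((fun x : Fin n → ℝ => ‖∑ i, x i • a i‖) '' stdSimplex ℝ (Fin n)) Δ₀)
    (hR' : IsGreatest (Set.range (fun i => ‖a i‖) ∪ {‖b‖}) R')
    (Δ₀' : ℝ) (hΔ₀'pos : 0 < Δ₀') (hΔ₀'le : Δ₀' ≤ Δ₀)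
    (ε : ℝ) (hεpos : 0 < ε) (hεle : ε ≤ Δ₀' / (2 * R'))
    (α : Fin (n + 1) → ℝ) (hα0 : ∀ i, 0 ≤ α i) (hα1 : ∑ i, α i = 1)
    (hp' : ‖(∑ i : Fin n, α i.castSucc • a i) - α (Fin.last n) • b‖ < ε * R') :
    0 < α (Fin.last n) ∧
      (∀ i : Fin n, 0 ≤ α i.castSucc / α (Fin.last n)) ∧
      dist (∑ i : Fin n, (α i.castSucc / α (Fin.last n)) • a i) b <
        (2 * (1 + ‖b‖ / Δ₀') * ε) * R' := by
  -- R' > 0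
  have hbR : ‖b‖ ≤ R' := hR'.2 (Or.inr rfl)
  have hR'pos : 0 < R' := by
    by_contra h
    push_neg at h
    have h2 : Δ₀' / (2 * R') ≤ 0 := by
      rcases lt_or_eq_of_le h with h' | h'
      · exact le_of_lt (div_neg_of_pos_of_neg hΔ₀'pos (by linarith))
      · rw [h']; simp
    linarith
  have hεR' : ε * R' ≤ Δ₀' / 2 := by
    have h1 : ε * R' ≤ (Δ₀' / (2 * R')) * R' := by gcongr
    have h2 : (Δ₀' / (2 * R')) * R' = Δ₀' / 2 := by field_simp
    linarith
  -- key lower bound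
  have key : ∀ y : Fin n → ℝ, (∀ i, 0 ≤ y i) → 0 < ∑ i, y i →
      (∑ i, y i) * Δ₀ ≤ ‖∑ i, y i • a i‖ := by
    intro y hy hs
    set σ := ∑ i, y i with hσ
    have hmem : (fun i => y i / σ) ∈ stdSimplex ℝ (Fin n) := by
      refine ⟨fun i => div_nonneg (hy i) hs.le, ?_⟩
      rw [← Finset.sum_div, ← hσ, div_self hs.ne']
    have hle : Δ₀ ≤ ‖∑ i, (y i / σ) • a i‖ := hΔ₀.2 ⟨_, hmem, rfl⟩
    have heq : ∑ i, (y i / σ) • a i = σ⁻¹ • ∑ i, y i • a i := by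
      rw [Finset.smul_sum]
      refine Finset.sum_congr rfl fun i _ => ?_
      rw [smul_smul, div_eq_inv_mul]
    rw [heq, norm_smul, norm_inv, Real.norm_eq_abs, abs_of_pos hs] at hle
    have := mul_le_mul_of_nonneg_left hle hs.le
    calc σ * Δ₀ ≤ σ * (σ⁻¹ * ‖∑ i, y i • a i‖) := this
      _ = ‖∑ i, y i • a i‖ := by field_simp
  set β := α (Fin.last n) with hβ
  set s := ∑ i : Fin n, α i.castSucc with hs
  have hsum : s + β = 1 := by
    rw [hs, hβ, ← Fin.sum_univ_castSucc]; exact hα1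
  have hsnn : 0 ≤ s := Finset.sum_nonneg fun i _ => hα0 _
  have hβpos : 0 < β := by
    rcases (hα0 (Fin.last n)).lt_or_eq with h | h
    · exact h
    · exfalso
      have hs1 : (0:ℝ) < s := by linarith
      have hk : s * Δ₀ ≤ ‖∑ i : Fin n, α i.castSucc • a i‖ :=
        key (fun i => α i.castSucc) (fun i => hα0 _) hs1
      have hβ0 : β = 0 := by rw [hβ, ← h]
      rw [hβ0, zero_smul, sub_zero] at hp'
      have hs1' : s = 1 := by linarith
      rw [hs1', one_mul] at hk
      linarith
  refine ⟨hβpos, fun i => div_nonneg (hα0 _) hβpos.le, ?_⟩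
  -- upper bound on ‖∑ α a‖
  have hnormsum : ‖∑ i : Fin n, α i.castSucc • a i‖ ≤ ε * R' + β * ‖b‖ := by
    have h1 : (∑ i : Fin n, α i.castSucc • a i) =
        ((∑ i : Fin n, α i.castSucc • a i) - β • b) + β • b := by abel
    calc ‖∑ i : Fin n, α i.castSucc • a i‖
        ≤ ‖(∑ i : Fin n, α i.castSucc • a i) - β • b‖ + ‖β • b‖ := by
          nth_rewrite 1 [h1]; exact norm_add_le _ _
      _ ≤ ε * R' + β * ‖b‖ := by
          rw [norm_smul, Real.norm_eq_abs, abs_of_pos hβpos]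
          exact add_le_add hp'.le le_rfl
  have hlow : s * Δ₀' ≤ ε * R' + β * ‖b‖ := by
    rcases hsnn.lt_or_eq with h | h
    · have hk : s * Δ₀ ≤ ‖∑ i : Fin n, α i.castSucc • a i‖ :=
        key (fun i => α i.castSucc) (fun i => hα0 _) h
      have h2 : s * Δ₀' ≤ s * Δ₀ := mul_le_mul_of_nonneg_left hΔ₀'le h.le
      linarith
    · rw [← h, zero_mul]
      have : 0 ≤ β * ‖b‖ := mul_nonneg hβpos.le (norm_nonneg b)
      nlinarith
  have hβlb : Δ₀' ≤ 2 * β * (Δ₀' + ‖b‖) := by nlinarith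
  -- rewrite the distance
  have heq2 : (∑ i : Fin n, (α i.castSucc / β) • a i) - b =
      β⁻¹ • ((∑ i : Fin n, α i.castSucc • a i) - β • b) := by
    rw [smul_sub, smul_smul, inv_mul_cancel₀ hβpos.ne', one_smul, Finset.smul_sum]
    congr 1
    refine Finset.sum_congr rfl fun i _ => ?_
    rw [smul_smul, div_eq_inv_mul]
  rw [dist_eq_norm, heq2, norm_smul, norm_inv, Real.norm_eq_abs, abs_of_pos hβpos]
  have hC : (0:ℝ) < Δ₀' + ‖b‖ := by
    have := norm_nonneg b; linarith
  have hβinv : β⁻¹ ≤ 2 * (Δ₀' + ‖b‖) / Δ₀' := by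
    rw [le_div_iff₀ hΔ₀'pos]
    have h1 := mul_le_mul_of_nonneg_left hβlb (inv_nonneg.mpr hβpos.le)
    have h2 : β⁻¹ * (2 * β * (Δ₀' + ‖b‖)) = 2 * (Δ₀' + ‖b‖) := by
      field_simp
    linarith
  calc β⁻¹ * ‖(∑ i : Fin n, α i.castSucc • a i) - β • b‖
      < β⁻¹ * (ε * R') := by
        exact mul_lt_mul_of_pos_left hp' (inv_pos.mpr hβpos)
    _ ≤ (2 * (Δ₀' + ‖b‖) / Δ₀') * (ε * R') := by
        exact mul_le_mul_of_nonneg_right hβinv (by positivity)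
    _ = (2 * (1 + ‖b‖ / Δ₀') * ε) * R' := by field_simp
end
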